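/- arXiv:1107.1327 — 3 statements merged into one kernel-verified Lean document; each statement's English description precedes it below -/
import Mathlib

section
/- The second leading coefficient τ_{2q+1} of P_{2q+1} (the coefficient of m^q) equals (2q-1)·binom(2(q-1), q-1) for all q ≥ 1, with τ_1 = 0. -/
/-!
Write `A_t = P_{2t+1}` and `B_t = P_{2t+2}`, both of degree at most `t + 1`. Splitting the
convolution by parity, `A_{t+1}` is `B_t(m+1)` plus the products `A_i A_j` (`i + j = t`) and
`B_i B_j` (`i + j = t - 1`), while `B_{t+1}` is `A_{t+1}(m+1)` plus `2 A_i B_j` (`i + j = t`).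
Reading off coefficients, the top ones are the Catalan numbers `c_t` for `A_t` and `(2t+1) c_t`
for `B_t`, and then `τ_{2t+3} = (t+1)(2t+1) c_t = (2t+1) binom(2t, t)`. The last two inductions
close by the symmetrisation identity `∑_{i+j=n} c_i (2j+1) c_j = (n+1) c_{n+1}`.
-/

open Polynomial Finset

namespace Polynomial

variable {R : Type*} [Semiring R]

theorem coeff_taylor_of_natDegree_le (r : R) {p : R[X]} {d : ℕ} (h : p.natDegree ≤ d) :
    (taylor r p).coeff d = p.coeff d := by
  rcases h.lt_or_eq with h | rfl
  · rw [coeff_eq_zero_of_natDegree_lt h,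
      coeff_eq_zero_of_natDegree_lt (p := taylor r p) (by rwa [natDegree_taylor])]
  · exact coeff_taylor_natDegree r p

theorem coeff_mul_add_add_one_of_natDegree_le {p q : R[X]} {m n : ℕ}
    (hp : p.natDegree ≤ m + 1) (hq : q.natDegree ≤ n + 1) :
    (p * q).coeff (m + n + 1) = p.coeff (m + 1) * q.coeff n + p.coeff m * q.coeff (n + 1) := by
  rw [coeff_mul, sum_eq_add (m + 1, n) (m, n + 1) (by simp)]
  · rintro ⟨i, j⟩ hij hne
    rw [HasAntidiagonal.mem_antidiagonal] at hij
    rcases lt_or_ge (m + 1) i with hi | hi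
    · rw [coeff_eq_zero_of_natDegree_lt (hp.trans_lt hi), zero_mul]
    · have hj : n + 1 < j := by
        simp only [ne_eq, Prod.mk.injEq, not_and] at hne
        omega
      rw [coeff_eq_zero_of_natDegree_lt (hq.trans_lt hj), mul_zero]
  · simp [add_right_comm]
  · simp [add_assoc]

section Convolution

variable {f g : ℕ → R[X]}

theorem natDegree_sum_antidiagonal_mul_le (hf : ∀ i, (f i).natDegree ≤ i + 1)
    (hg : ∀ j, (g j).natDegree ≤ j + 1) (n : ℕ) :
    (∑ p ∈ antidiagonal n, f p.1 * g p.2).natDegree ≤ n + 2 :=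
  natDegree_sum_le_of_forall_le _ _ fun p hp => natDegree_mul_le.trans <| by
    have := hf p.1; have := hg p.2; rw [HasAntidiagonal.mem_antidiagonal] at hp; omega

theorem coeff_sum_antidiagonal_mul_add_two (hf : ∀ i, (f i).natDegree ≤ i + 1)
    (hg : ∀ j, (g j).natDegree ≤ j + 1) (n : ℕ) :
    (∑ p ∈ antidiagonal n, f p.1 * g p.2).coeff (n + 2) =
      ∑ p ∈ antidiagonal n, (f p.1).coeff (p.1 + 1) * (g p.2).coeff (p.2 + 1) := by
  rw [finsetSum_coeff]
  refine sum_congr rfl fun p hp => ?_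
  rw [← coeff_mul_add_eq_of_natDegree_le (hf p.1) (hg p.2),
    ← HasAntidiagonal.mem_antidiagonal.1 hp]
  ring_nf

theorem coeff_sum_antidiagonal_mul_add_one (hf : ∀ i, (f i).natDegree ≤ i + 1)
    (hg : ∀ j, (g j).natDegree ≤ j + 1) (n : ℕ) :
    (∑ p ∈ antidiagonal n, f p.1 * g p.2).coeff (n + 1) =
      ∑ p ∈ antidiagonal n, ((f p.1).coeff (p.1 + 1) * (g p.2).coeff p.2 +
        (f p.1).coeff p.1 * (g p.2).coeff (p.2 + 1)) := by
  rw [finsetSum_coeff]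
  refine sum_congr rfl fun p hp => ?_
  rw [← coeff_mul_add_add_one_of_natDegree_le (hf p.1) (hg p.2),
    ← HasAntidiagonal.mem_antidiagonal.1 hp]

end Convolution

end Polynomial

namespace Finset

variable {M : Type*} [AddCommMonoid M]

theorem sum_range_two_mul (f : ℕ → M) (n : ℕ) :
    ∑ k ∈ range (2 * n), f k =
      ∑ k ∈ range n, f (2 * k) + ∑ k ∈ range n, f (2 * k + 1) := by
  induction n with
  | zero => simp
  | succ n ih =>
    rw [Nat.mul_succ, sum_range_succ, sum_range_succ, ih, sum_range_succ, sum_range_succ]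
    abel

theorem sum_range_two_mul_add_one (f : ℕ → M) (n : ℕ) :
    ∑ k ∈ range (2 * n + 1), f k =
      ∑ k ∈ range (n + 1), f (2 * k) + ∑ k ∈ range n, f (2 * k + 1) := by
  rw [sum_range_succ, sum_range_two_mul, sum_range_succ (fun k => f (2 * k))]
  abel

theorem sum_Icc_one_eq_sum_antidiagonal (f : ℕ → ℕ → M) (n : ℕ) :
    ∑ k ∈ Icc 1 (n + 1), f k (n + 2 - k) = ∑ p ∈ antidiagonal n, f (p.1 + 1) (p.2 + 1) := by
  rw [Nat.sum_antidiagonal_eq_sum_range_succ_mk, ← Ico_add_one_right_eq_Icc,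
    sum_Ico_eq_sum_range, show n + 1 + 1 - 1 = n + 1 by omega]
  refine sum_congr rfl fun k hk => ?_
  rw [mem_range] at hk
  congr 1 <;> omega

namespace Nat

theorem sum_antidiagonal_two_mul_add_one (f : ℕ → ℕ → M) (t : ℕ) :
    ∑ p ∈ antidiagonal (2 * t + 1), f p.1 p.2 =
      ∑ p ∈ antidiagonal t, (f (2 * p.1) (2 * p.2 + 1) + f (2 * p.1 + 1) (2 * p.2)) := by
  rw [sum_antidiagonal_eq_sum_range_succ_mk, sum_antidiagonal_eq_sum_range_succ_mk,
    sum_add_distrib, show (2 * t + 1).succ = 2 * (t + 1) by omega, sum_range_two_mul]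
  congr 1 <;> refine sum_congr rfl fun k hk => ?_ <;> rw [mem_range] at hk <;> congr 1 <;>
    omega

theorem sum_antidiagonal_two_mul_add_two (f : ℕ → ℕ → M) (t : ℕ) :
    ∑ p ∈ antidiagonal (2 * t + 2), f p.1 p.2 =
      ∑ p ∈ antidiagonal (t + 1), f (2 * p.1) (2 * p.2) +
        ∑ p ∈ antidiagonal t, f (2 * p.1 + 1) (2 * p.2 + 1) := by
  rw [sum_antidiagonal_eq_sum_range_succ_mk, sum_antidiagonal_eq_sum_range_succ_mk,
    sum_antidiagonal_eq_sum_range_succ_mk, show (2 * t + 2).succ = 2 * (t + 1) + 1 by omega,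
    sum_range_two_mul_add_one]
  congr 1 <;> refine sum_congr rfl fun k hk => ?_ <;> rw [mem_range] at hk <;> congr 1 <;>
    omega

end Nat

end Finset

theorem succ_mul_catalan_succ_eq_sum_antidiagonal (n : ℕ) :
    (n + 1) * catalan (n + 1) =
      ∑ p ∈ antidiagonal n, catalan p.1 * ((2 * p.2 + 1) * catalan p.2) := by
  set S := ∑ p ∈ antidiagonal n, catalan p.1 * ((2 * p.2 + 1) * catalan p.2)
  have h : 2 * S = 2 * ((n + 1) * catalan (n + 1)) :=
    calc 2 * S = S + ∑ p ∈ antidiagonal n, catalan p.2 * ((2 * p.1 + 1) * catalan p.1) := by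
          rw [two_mul]
          exact congrArg (S + ·) (Nat.sum_antidiagonal_swap (f := fun p =>
            catalan p.1 * ((2 * p.2 + 1) * catalan p.2))).symm
      _ = ∑ p ∈ antidiagonal n, 2 * (n + 1) * (catalan p.1 * catalan p.2) := by
          rw [← sum_add_distrib]
          refine sum_congr rfl fun p hp => ?_
          rw [← HasAntidiagonal.mem_antidiagonal.1 hp]
          ring
      _ = 2 * ((n + 1) * catalan (n + 1)) := by rw [← mul_sum, catalan_succ']; ring
  omega

/-- `taylor 1 p` is `p(m + 1)`, and the convolution `∑_{k=1}^{n-1} P_k P_{n-k}` is indexed by the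
antidiagonal of `n - 2`. -/
structure IsPSequence {R : Type*} [CommSemiring R] (P : ℕ → R[X]) : Prop where
  one : P 1 = X
  two : P 2 = taylor 1 (P 1)
  add_three (n : ℕ) :
    P (n + 3) = taylor 1 (P (n + 2)) + ∑ p ∈ antidiagonal n, P (p.1 + 1) * P (p.2 + 1)

namespace IsPSequence

variable {R : Type*} [CommSemiring R] {P : ℕ → R[X]}

theorem of_comp (h1 : P 1 = X) (hrec : ∀ n, 1 ≤ n →
    P (n + 1) = (P n).comp (X + 1) + ∑ k ∈ Icc 1 (n - 1), P k * P (n - k)) :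
    IsPSequence P where
  one := h1
  two := by simpa [taylor_apply] using hrec 1 le_rfl
  add_three n := by
    rw [hrec (n + 2) (by omega), taylor_apply, C_1, show n + 2 - 1 = n + 1 by omega,
      sum_Icc_one_eq_sum_antidiagonal (fun i j => P i * P j)]

theorem three (hP : IsPSequence P) : P 3 = taylor 1 (P 2) + P 1 * P 1 := by
  simpa using hP.add_three 0

theorem two_mul_add_four (hP : IsPSequence P) (t : ℕ) :
    P (2 * t + 4) = taylor 1 (P (2 * t + 3)) +
      2 * ∑ p ∈ antidiagonal t, P (2 * p.1 + 1) * P (2 * p.2 + 2) := by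
  have hswap : ∑ p ∈ antidiagonal t, P (2 * p.1 + 2) * P (2 * p.2 + 1) =
      ∑ p ∈ antidiagonal t, P (2 * p.1 + 1) * P (2 * p.2 + 2) := by
    rw [← Nat.sum_antidiagonal_swap]
    exact sum_congr rfl fun p _ => mul_comm _ _
  rw [hP.add_three (2 * t + 1), Nat.sum_antidiagonal_two_mul_add_one
    (fun i j => P (i + 1) * P (j + 1)), sum_add_distrib, hswap, ← two_mul]

theorem two_mul_add_five (hP : IsPSequence P) (t : ℕ) :
    P (2 * t + 5) = taylor 1 (P (2 * t + 4)) +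
      ∑ p ∈ antidiagonal (t + 1), P (2 * p.1 + 1) * P (2 * p.2 + 1) +
      ∑ p ∈ antidiagonal t, P (2 * p.1 + 2) * P (2 * p.2 + 2) := by
  rw [hP.add_three (2 * t + 2), Nat.sum_antidiagonal_two_mul_add_two
    (fun i j => P (i + 1) * P (j + 1)), ← add_assoc]

theorem natDegree_le (hP : IsPSequence P) (n : ℕ) : (P (n + 1)).natDegree ≤ n / 2 + 1 := by
  induction n using Nat.strong_induction_on with
  | _ n ih =>
  match n with
  | 0 => rw [hP.one]; exact natDegree_X_le
  | 1 => rw [hP.two, natDegree_taylor, hP.one]; exact natDegree_X_le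
  | m + 2 =>
    rw [hP.add_three m]
    refine (natDegree_add_le _ _).trans (max_le ?_ ?_)
    · rw [natDegree_taylor]
      have : (P (m + 2)).natDegree ≤ (m + 1) / 2 + 1 := ih (m + 1) (by omega)
      omega
    · refine natDegree_sum_le_of_forall_le _ _ fun p hp => natDegree_mul_le.trans ?_
      rw [HasAntidiagonal.mem_antidiagonal] at hp
      have := ih p.1 (by omega)
      have := ih p.2 (by omega)
      omega

theorem natDegree_odd_le (hP : IsPSequence P) (t : ℕ) : (P (2 * t + 1)).natDegree ≤ t + 1 :=
  (hP.natDegree_le (2 * t)).trans (by omega)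

theorem natDegree_even_le (hP : IsPSequence P) (t : ℕ) : (P (2 * t + 2)).natDegree ≤ t + 1 :=
  (hP.natDegree_le (2 * t + 1)).trans (by omega)

theorem coeff_odd_top_succ (hP : IsPSequence P) (t : ℕ) :
    (P (2 * t + 3)).coeff (t + 2) = ∑ p ∈ antidiagonal t,
      (P (2 * p.1 + 1)).coeff (p.1 + 1) * (P (2 * p.2 + 1)).coeff (p.2 + 1) := by
  rcases t with _ | t
  · have hdeg : (taylor 1 (P 2)).natDegree < 2 := by
      rw [natDegree_taylor]
      exact (hP.natDegree_even_le 0).trans_lt one_lt_two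
    rw [hP.three, coeff_add, coeff_eq_zero_of_natDegree_lt hdeg]
    simp [hP.one]
  · have hdeg : (taylor 1 (P (2 * t + 4))).natDegree < t + 3 := by
      rw [natDegree_taylor]
      exact (hP.natDegree_even_le (t + 1)).trans_lt (by omega)
    have hdeg' := natDegree_sum_antidiagonal_mul_le hP.natDegree_even_le hP.natDegree_even_le t
    rw [show 2 * (t + 1) + 3 = 2 * t + 5 by ring, hP.two_mul_add_five, coeff_add, coeff_add,
      coeff_eq_zero_of_natDegree_lt hdeg, coeff_eq_zero_of_natDegree_lt (hdeg'.trans_lt (by omega)),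
      coeff_sum_antidiagonal_mul_add_two hP.natDegree_odd_le hP.natDegree_odd_le, zero_add,
      add_zero]

theorem coeff_even_top_succ (hP : IsPSequence P) (t : ℕ) :
    (P (2 * t + 4)).coeff (t + 2) = (P (2 * t + 3)).coeff (t + 2) + 2 * ∑ p ∈ antidiagonal t,
      (P (2 * p.1 + 1)).coeff (p.1 + 1) * (P (2 * p.2 + 2)).coeff (p.2 + 1) := by
  have hdeg : (P (2 * t + 3)).natDegree ≤ t + 2 := hP.natDegree_odd_le (t + 1)
  rw [hP.two_mul_add_four, coeff_add, coeff_taylor_of_natDegree_le _ hdeg,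
    coeff_ofNat_mul, coeff_sum_antidiagonal_mul_add_two hP.natDegree_odd_le hP.natDegree_even_le]

theorem coeff_odd_subtop_succ (hP : IsPSequence P) (t : ℕ) :
    (P (2 * t + 5)).coeff (t + 2) = (P (2 * t + 4)).coeff (t + 2) +
      2 * ∑ p ∈ antidiagonal (t + 1),
        (P (2 * p.1 + 1)).coeff (p.1 + 1) * (P (2 * p.2 + 1)).coeff p.2 +
      ∑ p ∈ antidiagonal t,
        (P (2 * p.1 + 2)).coeff (p.1 + 1) * (P (2 * p.2 + 2)).coeff (p.2 + 1) := by
  have hdeg : (P (2 * t + 4)).natDegree ≤ t + 2 := hP.natDegree_even_le (t + 1)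
  have hswap : ∑ p ∈ antidiagonal (t + 1),
      (P (2 * p.1 + 1)).coeff p.1 * (P (2 * p.2 + 1)).coeff (p.2 + 1) =
      ∑ p ∈ antidiagonal (t + 1),
        (P (2 * p.1 + 1)).coeff (p.1 + 1) * (P (2 * p.2 + 1)).coeff p.2 := by
    rw [← Nat.sum_antidiagonal_swap]
    exact sum_congr rfl fun p _ => mul_comm _ _
  rw [hP.two_mul_add_five, coeff_add, coeff_add, coeff_taylor_of_natDegree_le _ hdeg,
    coeff_sum_antidiagonal_mul_add_one hP.natDegree_odd_le hP.natDegree_odd_le,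
    coeff_sum_antidiagonal_mul_add_two hP.natDegree_even_le hP.natDegree_even_le, sum_add_distrib,
    hswap, ← two_mul]

theorem coeff_odd_top (hP : IsPSequence P) (t : ℕ) :
    (P (2 * t + 1)).coeff (t + 1) = catalan t := by
  induction t using Nat.strong_induction_on with
  | _ t ih =>
  rcases t with _ | t
  · simp [hP.one]
  · rw [show 2 * (t + 1) + 1 = 2 * t + 3 by ring, hP.coeff_odd_top_succ, catalan_succ',
      Nat.cast_sum]
    refine sum_congr rfl fun p hp => ?_
    have := HasAntidiagonal.mem_antidiagonal.1 hp
    rw [ih p.1 (by omega), ih p.2 (by omega), Nat.cast_mul]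

theorem coeff_even_top (hP : IsPSequence P) (t : ℕ) :
    (P (2 * t + 2)).coeff (t + 1) = ((2 * t + 1) * catalan t : ℕ) := by
  induction t using Nat.strong_induction_on with
  | _ t ih =>
  rcases t with _ | t
  · rw [hP.two, coeff_taylor_of_natDegree_le _ (hP.natDegree_odd_le 0), hP.coeff_odd_top 0]
    simp
  · have hsum : ∑ p ∈ antidiagonal t,
        (P (2 * p.1 + 1)).coeff (p.1 + 1) * (P (2 * p.2 + 2)).coeff (p.2 + 1) =
        ((t + 1) * catalan (t + 1) : ℕ) := by
      rw [succ_mul_catalan_succ_eq_sum_antidiagonal, Nat.cast_sum]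
      refine sum_congr rfl fun p hp => ?_
      have := HasAntidiagonal.mem_antidiagonal.1 hp
      rw [hP.coeff_odd_top, ih p.2 (by omega)]
      push_cast
      ring
    rw [show 2 * (t + 1) + 2 = 2 * t + 4 by ring, hP.coeff_even_top_succ, hsum,
      show 2 * t + 3 = 2 * (t + 1) + 1 by ring, hP.coeff_odd_top]
    push_cast
    ring

theorem coeff_odd_subtop (hP : IsPSequence P) (t : ℕ) :
    (P (2 * t + 3)).coeff (t + 1) = ((t + 1) * ((2 * t + 1) * catalan t) : ℕ) := by
  induction t using Nat.strong_induction_on with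
  | _ t ih =>
  rcases t with _ | t
  · rw [hP.three, coeff_add, coeff_taylor_of_natDegree_le _ (hP.natDegree_even_le 0),
      hP.coeff_even_top 0, hP.one]
    simp
  · have hsum : 2 * ∑ p ∈ antidiagonal (t + 1),
        (P (2 * p.1 + 1)).coeff (p.1 + 1) * (P (2 * p.2 + 1)).coeff p.2 +
        ∑ p ∈ antidiagonal t,
          (P (2 * p.1 + 2)).coeff (p.1 + 1) * (P (2 * p.2 + 2)).coeff (p.2 + 1) =
        ((2 * t + 3) * ((t + 1) * catalan (t + 1)) : ℕ) := by
      rw [Nat.sum_antidiagonal_succ']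
      simp only [mul_zero, zero_add, hP.one, coeff_X_zero]
      rw [succ_mul_catalan_succ_eq_sum_antidiagonal, mul_sum, mul_sum, ← sum_add_distrib,
        Nat.cast_sum]
      refine sum_congr rfl fun p hp => ?_
      have := HasAntidiagonal.mem_antidiagonal.1 hp
      rw [show 2 * (p.2 + 1) + 1 = 2 * p.2 + 3 by ring, hP.coeff_odd_top, ih p.2 (by omega),
        hP.coeff_even_top, hP.coeff_even_top, ← this]
      push_cast
      ring
    rw [show 2 * (t + 1) + 3 = 2 * t + 5 by ring, hP.coeff_odd_subtop_succ, add_assoc, hsum,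
      show 2 * t + 4 = 2 * (t + 1) + 2 by ring, hP.coeff_even_top]
    push_cast
    ring

end IsPSequence

theorem second_leading_coeff_odd_general
    (P : ℕ → Polynomial ℤ)
    (hP1 : P 1 = X)
    (hPrec : ∀ n, 1 ≤ n →
      P (n + 1) = (P n).comp (X + 1) + ∑ k ∈ Finset.Icc 1 (n - 1), P k * P (n - k)) :
    (P 1).coeff 0 = 0 ∧
    (∀ q, 1 ≤ q →
      (P (2 * q + 1)).coeff q =
        (2 * (q : ℤ) - 1) * Nat.choose (2 * (q - 1)) (q - 1)) := by
  have hP := IsPSequence.of_comp hP1 hPrec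
  refine ⟨by simp [hP1], fun q hq => ?_⟩
  obtain ⟨t, rfl⟩ : ∃ t, q = t + 1 := ⟨q - 1, by omega⟩
  rw [show 2 * (t + 1) + 1 = 2 * t + 3 by ring, hP.coeff_odd_subtop, Nat.add_sub_cancel,
    ← Nat.centralBinom_eq_two_mul_choose, ← succ_mul_catalan_eq_centralBinom]
  push_cast
  ring

theorem second_leading_coeff_odd
    (P : ℕ → Polynomial ℤ)
    (hP0 : P 0 = 0)
    (hP1 : P 1 = X)
    (hPrec : ∀ n, 1 ≤ n →
      P (n + 1) = (P n).comp (X + 1) + ∑ k ∈ Finset.Icc 1 (n - 1), P k * P (n - k)) :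
    (P 1).coeff 0 = 0 ∧
    (∀ q, 1 ≤ q →
      (P (2 * q + 1)).coeff q =
        (2 * (q : ℤ) - 1) * Nat.choose (2 * (q - 1)) (q - 1)) :=
  second_leading_coeff_odd_general P hP1 hPrec
end

section
/- The leading coefficients of the odd-indexed normal-form polynomials P^{NF}_{2q+1} are the Catalan numbers C_q, and they coincide with the leading coefficients of Q_{2q+1}. -/
/-!
By induction, `P n` and `Q n` have degree at most `⌈n/2⌉`. Hence the shift `P (2q)` evaluated at
`m + 1` does not reach degree `q + 1`, so `P (2q+1)` and `Q (2q+1)` share that coefficient; and in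
the convolution defining `Q (2q+1)` only products of two odd-indexed factors reach degree `q + 1`,
so these coefficients satisfy Catalan's recurrence `C (r+1) = ∑_{i+j=r} C i * C j`.
-/

open Polynomial Finset.HasAntidiagonal

variable {R : Type*} [Semiring R]

theorem natDegree_comp_X_add_one_le (p : R[X]) : (p.comp (X + 1)).natDegree ≤ p.natDegree := by
  have hX : (X + 1 : R[X]).natDegree ≤ 1 :=
    natDegree_add_le_of_degree_le natDegree_X_le (natDegree_one.trans_le zero_le_one)
  simpa using natDegree_comp_le.trans (Nat.mul_le_mul_left p.natDegree hX)

theorem sum_range_mul_eq_sum_antidiagonal (A B : ℕ → R) (n : ℕ) :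
    ∑ k ∈ Finset.range (n + 1), A (n - k) * B k = ∑ x ∈ antidiagonal n, A x.1 * B x.2 := by
  rw [← Finset.Nat.sum_antidiagonal_swap]
  exact (Finset.Nat.sum_antidiagonal_eq_sum_range_succ (fun a b => A b * B a) n).symm

section HalfDegree

variable {A B : ℕ → R[X]}

theorem natDegree_sum_antidiagonal_mul_le {n : ℕ}
    (hA : ∀ k ≤ n, (A k).natDegree ≤ (k + 1) / 2)
    (hB : ∀ k ≤ n, (B k).natDegree ≤ (k + 1) / 2) :
    (∑ x ∈ antidiagonal n, A x.1 * B x.2).natDegree ≤ (n + 2) / 2 := by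
  refine natDegree_sum_le_of_forall_le _ _ fun x hx => natDegree_mul_le.trans ?_
  rw [mem_antidiagonal] at hx
  have := hA x.1 (by omega)
  have := hB x.2 (by omega)
  omega

theorem coeff_sum_antidiagonal_mul (hA : ∀ k, (A k).natDegree ≤ (k + 1) / 2)
    (hB : ∀ k, (B k).natDegree ≤ (k + 1) / 2) (r : ℕ) :
    (∑ x ∈ antidiagonal (2 * r + 2), A x.1 * B x.2).coeff (r + 2) =
      ∑ x ∈ antidiagonal r,
        (A (2 * x.1 + 1)).coeff (x.1 + 1) * (B (2 * x.2 + 1)).coeff (x.2 + 1) := by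
  rw [finsetSum_coeff]
  refine (Finset.sum_of_injOn (fun x => (2 * x.1 + 1, 2 * x.2 + 1)) ?_ ?_ ?_ ?_).symm
  · intro x _ y _ h
    simp only [Prod.mk.injEq] at h
    ext <;> omega
  · intro x hx
    simp only [Finset.mem_coe, mem_antidiagonal] at hx ⊢
    omega
  · intro x hx hx'
    rw [mem_antidiagonal] at hx
    have hodd : ¬ (Odd x.1 ∧ Odd x.2) := by
      rintro ⟨⟨i, hi⟩, ⟨j, hj⟩⟩
      refine hx' ⟨(i, j), ?_, by ext <;> simp [hi, hj]⟩
      simp only [Finset.mem_coe, mem_antidiagonal]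
      omega
    refine coeff_eq_zero_of_natDegree_lt (natDegree_mul_le.trans_lt ?_)
    have := hA x.1
    have := hB x.2
    simp only [Nat.not_odd_iff_even, not_and_or, Nat.even_iff] at hodd
    omega
  · intro x hx
    rw [mem_antidiagonal] at hx
    rw [show r + 2 = (x.1 + 1) + (x.2 + 1) by omega]
    have h1 : (A (2 * x.1 + 1)).natDegree ≤ x.1 + 1 := (hA _).trans (by omega)
    have h2 : (B (2 * x.2 + 1)).natDegree ≤ x.2 + 1 := (hB _).trans (by omega)
    exact (coeff_mul_add_eq_of_natDegree_le h1 h2).symm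

end HalfDegree

namespace NormalForm

variable {P Q : ℕ → R[X]}

theorem natDegree_le_half (hP0 : P 0 = 0) (hQ0 : Q 0 = 0) (hQ1 : Q 1 = X)
    (hQrec : ∀ n, 1 ≤ n → Q (n + 1) = ∑ k ∈ Finset.range (n + 1), Q (n - k) * P k)
    (hPrec : ∀ n, P (n + 1) = (P n).comp (X + 1) + Q (n + 1)) (n : ℕ) :
    (P n).natDegree ≤ (n + 1) / 2 ∧ (Q n).natDegree ≤ (n + 1) / 2 := by
  induction n using Nat.strong_induction_on with
  | _ n ih =>
    match n with
    | 0 => simp [hP0, hQ0]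
    | n + 1 =>
      have hQ : (Q (n + 1)).natDegree ≤ (n + 2) / 2 := by
        rcases Nat.eq_zero_or_pos n with rfl | hn
        · simpa [hQ1] using natDegree_X_le
        · rw [hQrec n hn, sum_range_mul_eq_sum_antidiagonal]
          exact natDegree_sum_antidiagonal_mul_le (fun k _ => (ih k (by omega)).2)
            (fun k _ => (ih k (by omega)).1)
      have hP := (natDegree_comp_X_add_one_le (P n)).trans (ih n (by omega)).1
      refine ⟨?_, hQ⟩
      rw [hPrec n]
      exact (natDegree_add_le _ _).trans (max_le (by omega) hQ)

theorem coeff_P_odd_eq_coeff_Q_odd (hPrec : ∀ n, P (n + 1) = (P n).comp (X + 1) + Q (n + 1))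
    (hP : ∀ n, (P n).natDegree ≤ (n + 1) / 2) (q : ℕ) :
    (P (2 * q + 1)).coeff (q + 1) = (Q (2 * q + 1)).coeff (q + 1) := by
  have hlt : ((P (2 * q)).comp (X + 1)).natDegree < q + 1 :=
    (natDegree_comp_X_add_one_le _).trans_lt ((hP (2 * q)).trans_lt (by omega))
  rw [hPrec, coeff_add, coeff_eq_zero_of_natDegree_lt hlt, zero_add]

theorem coeff_Q_odd_eq_catalan (hQ1 : Q 1 = X)
    (hQrec : ∀ n, 1 ≤ n → Q (n + 1) = ∑ k ∈ Finset.range (n + 1), Q (n - k) * P k)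
    (hP : ∀ n, (P n).natDegree ≤ (n + 1) / 2) (hQ : ∀ n, (Q n).natDegree ≤ (n + 1) / 2)
    (hPQ : ∀ q, (P (2 * q + 1)).coeff (q + 1) = (Q (2 * q + 1)).coeff (q + 1)) (q : ℕ) :
    (Q (2 * q + 1)).coeff (q + 1) = catalan q := by
  induction q using Nat.strong_induction_on with
  | _ q ih =>
    match q with
    | 0 => simp [hQ1]
    | r + 1 =>
      have ih' : ∀ x ∈ antidiagonal r, (Q (2 * x.1 + 1)).coeff (x.1 + 1) *
          (P (2 * x.2 + 1)).coeff (x.2 + 1) = catalan x.1 * catalan x.2 := by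
        intro x hx
        rw [mem_antidiagonal] at hx
        rw [hPQ, ih x.1 (by omega), ih x.2 (by omega)]
      rw [show 2 * (r + 1) + 1 = 2 * r + 2 + 1 by ring, hQrec (2 * r + 2) (by omega),
        sum_range_mul_eq_sum_antidiagonal, coeff_sum_antidiagonal_mul hQ hP,
        Finset.sum_congr rfl ih', catalan_succ']
      push_cast
      rfl

end NormalForm

theorem normal_form_odd_leading_coeff_catalan_general
    (P Q : ℕ → Polynomial ℤ)
    (hP0 : P 0 = 0) (hQ0 : Q 0 = 0)
    (hQ1 : Q 1 = X)
    (hQrec : ∀ n, 1 ≤ n →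
      Q (n + 1) = ∑ k ∈ Finset.range (n + 1), Q (n - k) * P k)
    (hPrec : ∀ n, P (n + 1) = (P n).comp (X + 1) + Q (n + 1)) :
    ∀ q : ℕ, (P (2 * q + 1)).coeff (q + 1) = catalan q ∧
      (Q (2 * q + 1)).coeff (q + 1) = (P (2 * q + 1)).coeff (q + 1) := by
  have hdeg := NormalForm.natDegree_le_half hP0 hQ0 hQ1 hQrec hPrec
  have hPQ := NormalForm.coeff_P_odd_eq_coeff_Q_odd hPrec fun n => (hdeg n).1
  intro q
  rw [hPQ]
  exact ⟨NormalForm.coeff_Q_odd_eq_catalan hQ1 hQrec (fun n => (hdeg n).1) (fun n => (hdeg n).2)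
    hPQ q, rfl⟩

theorem normal_form_odd_leading_coeff_catalan
    (P Q : ℕ → Polynomial ℤ)
    (hP0 : P 0 = 0) (hQ0 : Q 0 = 0)
    (hP1 : P 1 = X) (hQ1 : Q 1 = X)
    (hQrec : ∀ n, 1 ≤ n →
      Q (n + 1) = ∑ k ∈ Finset.range (n + 1), Q (n - k) * P k)
    (hPrec : ∀ n, P (n + 1) = (P n).comp (X + 1) + Q (n + 1)) :
    ∀ q : ℕ, (P (2 * q + 1)).coeff (q + 1) = catalan q ∧
      (Q (2 * q + 1)).coeff (q + 1) = (P (2 * q + 1)).coeff (q + 1) :=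
  normal_form_odd_leading_coeff_catalan_general P Q hP0 hQ0 hQ1 hQrec hPrec
end

section
/- The leading coefficients ε_{2q} of the even-indexed normal-form polynomials P^{NF}_{2q} satisfy ε_0 = 0, ε_2 = 1, and ε_{2q+4} = 2·binom(2q+1, q) for q ≥ 0. -/
/-!
Pₙ and Qₙ have degree at most ⌈n/2⌉, and only the coefficients in that degree interact:
composing with `X + 1` keeps the top coefficient, and in `Q_{n+1} = ∑ Q_{n-k} P_k` a product
reaches degree ⌈(n+1)/2⌉ unless both indices are even. Splitting by parity, the odd-index top
coefficients of P and Q obey the Catalan recursion, while the generating functions `E`, `V` of the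
even-index top coefficients of P and Q satisfy `E = X C + V` and `V = X C (E + V)`, where `C` is the
Catalan series. Hence `E = X / (1 - 2X C) = X / √(1 - 4X) = X ∑ centralBinom n Xⁿ`, and
`centralBinom (q + 1) = 2 binom(2q + 1, q)`.
-/

open Polynomial

theorem Finset.sum_range_two_mul_s18 {M : Type*} [AddCommMonoid M] (f : ℕ → M) (n : ℕ) :
    ∑ k ∈ range (2 * n), f k = ∑ i ∈ range n, (f (2 * i) + f (2 * i + 1)) := by
  induction n with
  | zero => simp
  | succ n ih =>
    rw [mul_add, mul_one, sum_range_succ, sum_range_succ, sum_range_succ, ih, add_assoc]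

theorem Nat.centralBinom_succ_eq_two_mul_choose (n : ℕ) :
    (n + 1).centralBinom = 2 * (2 * n + 1).choose n := by
  rw [centralBinom_eq_two_mul_choose, show 2 * (n + 1) = 2 * n + 1 + 1 by ring,
    choose_succ_succ', choose_symm_half, two_mul]
  ring

namespace Polynomial

variable {R : Type*} [Semiring R]

theorem natDegree_comp_X_add_one (p : R[X]) : (p.comp (X + 1)).natDegree = p.natDegree := by
  rw [← C_1, ← taylor_apply, natDegree_taylor]

theorem coeff_comp_X_add_one_of_natDegree_le {p : R[X]} {d : ℕ} (hp : p.natDegree ≤ d) :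
    (p.comp (X + 1)).coeff d = p.coeff d := by
  rcases hp.lt_or_eq with hp | rfl
  · rw [coeff_eq_zero_of_natDegree_lt hp,
      coeff_eq_zero_of_natDegree_lt (by rwa [natDegree_comp_X_add_one])]
  · rw [← C_1, ← taylor_apply, coeff_taylor_natDegree, leadingCoeff]

end Polynomial

namespace PowerSeries

theorem coeff_mul_eq_sum_range {R : Type*} [Semiring R] (F G : R⟦X⟧) (m : ℕ) :
    coeff m (F * G) = ∑ i ∈ Finset.range (m + 1), coeff (m - i) F * coeff i G := by
  rw [coeff_mul, ← Finset.Nat.sum_antidiagonal_swap]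
  exact Finset.Nat.sum_antidiagonal_eq_sum_range_succ (fun i j => coeff j F * coeff i G) m

noncomputable def catalanSeriesInt : ℤ⟦X⟧ := mk fun n => (catalan n : ℤ)

noncomputable def centralBinomSeries : ℤ⟦X⟧ := mk fun n => (n.centralBinom : ℤ)

@[simp] theorem coeff_catalanSeriesInt (n : ℕ) : coeff n catalanSeriesInt = catalan n :=
  coeff_mk _ _

@[simp] theorem coeff_centralBinomSeries (n : ℕ) :
    coeff n centralBinomSeries = n.centralBinom :=
  coeff_mk _ _

theorem X_mul_catalanSeriesInt_sq : X * catalanSeriesInt ^ 2 = catalanSeriesInt - 1 := by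
  have h := congrArg (map (Nat.castRingHom ℤ)) catalanSeries_sq_mul_X_add_one
  have hC : map (Nat.castRingHom ℤ) catalanSeries = catalanSeriesInt := by ext; simp
  simp only [map_add, map_mul, map_pow, map_X, map_one, hC] at h
  linear_combination h

theorem one_sub_two_X_mul_catalanSeriesInt_sq :
    (1 - 2 * X * catalanSeriesInt) ^ 2 = 1 - 4 * X := by
  linear_combination 4 * X * X_mul_catalanSeriesInt_sq

theorem one_sub_two_X_mul_catalanSeriesInt_mul_derivative :
    (1 - 2 * X * catalanSeriesInt) * d⁄dX ℤ (1 - 2 * X * catalanSeriesInt) = -2 := by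
  have h := congrArg (d⁄dX ℤ) one_sub_two_X_mul_catalanSeriesInt_sq
  have h4 : d⁄dX ℤ (1 - 4 * X : ℤ⟦X⟧) = -4 := by
    rw [show (4 : ℤ⟦X⟧) = ((4 : ℕ) : ℤ⟦X⟧) by norm_cast, map_sub, derivative_one,
      Derivation.leibniz, Derivation.map_natCast, derivative_X, smul_eq_mul, smul_zero]
    norm_num
  rw [derivative_pow, h4] at h
  have h2 : (2 : ℤ⟦X⟧) ≠ 0 := fun h2 => by
    simpa [map_ofNat constantCoeff 2] using congrArg constantCoeff h2
  apply mul_left_cancel₀ h2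
  linear_combination h

theorem derivative_centralBinomSeries :
    d⁄dX ℤ centralBinomSeries = 2 * centralBinomSeries + 4 * X * d⁄dX ℤ centralBinomSeries := by
  ext n
  rw [← map_ofNat C 2, ← map_ofNat C 4, mul_assoc, map_add, coeff_C_mul, coeff_C_mul]
  rcases n with _ | n
  · simp [coeff_derivative, Nat.centralBinom, Nat.choose]
  · have h := Nat.succ_mul_centralBinom_succ (n + 1)
    zify at h
    simp only [coeff_succ_X_mul, coeff_derivative, coeff_centralBinomSeries]
    push_cast at h ⊢
    linear_combination h

/-- `1 - 2X C(X)` is a square root of `1 - 4X`; multiplying `(1 - 4X) B' = 2B` by it shows that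
`(1 - 2X C(X)) B(X)` has derivative zero. -/
theorem one_sub_two_X_mul_catalanSeriesInt_mul_centralBinomSeries :
    (1 - 2 * X * catalanSeriesInt) * centralBinomSeries = 1 := by
  have hD0 : (1 - 2 * X * catalanSeriesInt) ≠ 0 := fun h => by
    simpa using congrArg constantCoeff h
  refine derivative.ext ?_ (by simp [centralBinomSeries])
  apply mul_left_cancel₀ hD0
  rw [Derivation.leibniz, derivative_one, smul_eq_mul, smul_eq_mul, mul_zero]
  linear_combination derivative_centralBinomSeries +
    centralBinomSeries * one_sub_two_X_mul_catalanSeriesInt_mul_derivative +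
    d⁄dX ℤ centralBinomSeries * one_sub_two_X_mul_catalanSeriesInt_sq

/-- With `E = X B` and `V = X (B - C)` this reads `V = X (C E + V C)`: the recursion satisfied by
the even-index top coefficients of Q. -/
theorem X_mul_centralBinomSeries_sub_catalanSeriesInt :
    X * (catalanSeriesInt * (X * centralBinomSeries) +
        X * (centralBinomSeries - catalanSeriesInt) * catalanSeriesInt) =
      X * (centralBinomSeries - catalanSeriesInt) := by
  linear_combination (-X) * one_sub_two_X_mul_catalanSeriesInt_mul_centralBinomSeries -
    X * X_mul_catalanSeriesInt_sq

end PowerSeries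

open Finset in
structure IsNormalFormSystem (P Q : ℕ → ℤ[X]) : Prop where
  P_zero : P 0 = 0
  Q_zero : Q 0 = 0
  P_one : P 1 = X
  Q_one : Q 1 = X
  Q_succ : ∀ n, 1 ≤ n → Q (n + 1) = ∑ k ∈ range (n + 1), Q (n - k) * P k
  P_succ : ∀ n, P (n + 1) = (P n).comp (X + 1) + Q (n + 1)

namespace IsNormalFormSystem

open Finset
open PowerSeries (catalanSeriesInt centralBinomSeries coeff_catalanSeriesInt coeff_mul_eq_sum_range
  X_mul_catalanSeriesInt_sq X_mul_centralBinomSeries_sub_catalanSeriesInt coeff_succ_X_mul)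

variable {P Q : ℕ → ℤ[X]}

theorem natDegree_le (h : IsNormalFormSystem P Q) (n : ℕ) :
    (Q n).natDegree ≤ (n + 1) / 2 ∧ (P n).natDegree ≤ (n + 1) / 2 := by
  induction n using Nat.strong_induction_on with
  | _ n ih =>
  match n with
  | 0 => simp [h.P_zero, h.Q_zero]
  | 1 => simp [h.P_one, h.Q_one]
  | n + 2 =>
    have hQ : (Q (n + 2)).natDegree ≤ (n + 3) / 2 := by
      rw [h.Q_succ (n + 1) (by omega)]
      refine natDegree_sum_le_of_forall_le _ _ fun k hk => natDegree_mul_le.trans ?_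
      have hk := mem_range.1 hk
      have := (ih (n + 1 - k) (by omega)).1
      have := (ih k hk).2
      omega
    refine ⟨hQ, ?_⟩
    rw [h.P_succ (n + 1)]
    refine (natDegree_add_le _ _).trans (max_le ?_ hQ)
    rw [natDegree_comp_X_add_one]
    have := (ih (n + 1) (by omega)).2
    omega

theorem natDegree_Q_le (h : IsNormalFormSystem P Q) {n a : ℕ} (ha : (n + 1) / 2 ≤ a) :
    (Q n).natDegree ≤ a :=
  (h.natDegree_le n).1.trans ha

theorem natDegree_P_le (h : IsNormalFormSystem P Q) {n a : ℕ} (ha : (n + 1) / 2 ≤ a) :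
    (P n).natDegree ≤ a :=
  (h.natDegree_le n).2.trans ha

theorem coeff_Q_mul_P_eq_zero (h : IsNormalFormSystem P Q) {i j d : ℕ}
    (hd : (i + 1) / 2 + (j + 1) / 2 < d) : (Q i * P j).coeff d = 0 :=
  coeff_eq_zero_of_natDegree_lt <| natDegree_mul_le.trans_lt <|
    (add_le_add (h.natDegree_le i).1 (h.natDegree_le j).2).trans_lt hd

theorem coeff_Q_mul_P_add (h : IsNormalFormSystem P Q) {i j a b : ℕ} (ha : (i + 1) / 2 ≤ a)
    (hb : (j + 1) / 2 ≤ b) : (Q i * P j).coeff (a + b) = (Q i).coeff a * (P j).coeff b :=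
  coeff_mul_add_eq_of_natDegree_le (h.natDegree_Q_le ha) (h.natDegree_P_le hb)

theorem coeff_Q_two_mul_add_three (h : IsNormalFormSystem P Q) (m : ℕ) :
    (Q (2 * m + 3)).coeff (m + 2) = ∑ i ∈ range (m + 1),
      (Q (2 * (m - i) + 1)).coeff (m - i + 1) * (P (2 * i + 1)).coeff (i + 1) := by
  rw [h.Q_succ (2 * m + 2) (by omega), finsetSum_coeff,
    show 2 * m + 2 + 1 = 2 * (m + 1) + 1 by ring,
    sum_range_succ, sum_range_two_mul_s18, show 2 * m + 2 - 2 * (m + 1) = 0 by omega, h.Q_zero,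
    zero_mul, coeff_zero, add_zero]
  refine sum_congr rfl fun i hi => ?_
  have hi := mem_range.1 hi
  rw [h.coeff_Q_mul_P_eq_zero (by omega), zero_add,
    show 2 * m + 2 - (2 * i + 1) = 2 * (m - i) + 1 by omega,
    show m + 2 = (m - i + 1) + (i + 1) by omega, h.coeff_Q_mul_P_add (by omega) (by omega)]

theorem coeff_Q_two_mul_add_two (h : IsNormalFormSystem P Q) (m : ℕ) :
    (Q (2 * m + 2)).coeff (m + 1) = ∑ i ∈ range (m + 1),
      ((Q (2 * (m - i) + 1)).coeff (m - i + 1) * (P (2 * i)).coeff i +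
        (Q (2 * (m - i))).coeff (m - i) * (P (2 * i + 1)).coeff (i + 1)) := by
  rw [h.Q_succ (2 * m + 1) (by omega), finsetSum_coeff,
    show 2 * m + 1 + 1 = 2 * (m + 1) by ring, sum_range_two_mul_s18]
  refine sum_congr rfl fun i hi => ?_
  have hi := mem_range.1 hi
  rw [show 2 * m + 1 - 2 * i = 2 * (m - i) + 1 by omega,
    show 2 * m + 1 - (2 * i + 1) = 2 * (m - i) by omega]
  congr 1
  · rw [show m + 1 = (m - i + 1) + i by omega, h.coeff_Q_mul_P_add (by omega) (by omega)]
  · rw [show m + 1 = (m - i) + (i + 1) by omega, h.coeff_Q_mul_P_add (by omega) (by omega)]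

theorem coeff_P_two_mul_add_one (h : IsNormalFormSystem P Q) (m : ℕ) :
    (P (2 * m + 1)).coeff (m + 1) = (Q (2 * m + 1)).coeff (m + 1) := by
  rw [h.P_succ (2 * m), coeff_add, coeff_eq_zero_of_natDegree_lt, zero_add]
  rw [natDegree_comp_X_add_one]
  exact Nat.lt_succ_of_le (h.natDegree_P_le (by omega))

theorem coeff_P_two_mul_add_two (h : IsNormalFormSystem P Q) (m : ℕ) :
    (P (2 * m + 2)).coeff (m + 1) =
      (P (2 * m + 1)).coeff (m + 1) + (Q (2 * m + 2)).coeff (m + 1) := by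
  rw [h.P_succ (2 * m + 1), coeff_add,
    coeff_comp_X_add_one_of_natDegree_le (h.natDegree_P_le (by omega))]

theorem top_coeffs_eq (h : IsNormalFormSystem P Q) (m : ℕ) :
    (Q (2 * m + 1)).coeff (m + 1) = catalan m ∧ (P (2 * m + 1)).coeff (m + 1) = catalan m ∧
    (Q (2 * m)).coeff m =
      PowerSeries.coeff m (PowerSeries.X * (centralBinomSeries - catalanSeriesInt)) ∧
    (P (2 * m)).coeff m = PowerSeries.coeff m (PowerSeries.X * centralBinomSeries) := by
  induction m using Nat.strong_induction_on with
  | _ m ih =>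
  have hQ_odd : (Q (2 * m + 1)).coeff (m + 1) = catalan m := by
    rcases m with _ | m
    · simp [h.Q_one]
    rw [show 2 * (m + 1) + 1 = 2 * m + 3 by ring, h.coeff_Q_two_mul_add_three m]
    calc _ = ∑ i ∈ range (m + 1), PowerSeries.coeff (m - i) catalanSeriesInt *
            PowerSeries.coeff i catalanSeriesInt :=
          sum_congr rfl fun i hi => by
            have := mem_range.1 hi
            rw [(ih (m - i) (by omega)).1, (ih i (by omega)).2.1, coeff_catalanSeriesInt,
              coeff_catalanSeriesInt]
      _ = PowerSeries.coeff (m + 1) (PowerSeries.X * catalanSeriesInt ^ 2) := by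
          rw [coeff_succ_X_mul, sq, coeff_mul_eq_sum_range]
      _ = catalan (m + 1) := by simp [X_mul_catalanSeriesInt_sq]
  refine ⟨hQ_odd, (h.coeff_P_two_mul_add_one m).trans hQ_odd, ?_⟩
  rcases m with _ | m
  · simp [h.Q_zero, h.P_zero]
  have hQ_even : (Q (2 * m + 2)).coeff (m + 1) =
      PowerSeries.coeff (m + 1) (PowerSeries.X * (centralBinomSeries - catalanSeriesInt)) := by
    rw [h.coeff_Q_two_mul_add_two m, ← X_mul_centralBinomSeries_sub_catalanSeriesInt,
      coeff_succ_X_mul, map_add, coeff_mul_eq_sum_range, coeff_mul_eq_sum_range,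
      ← sum_add_distrib]
    refine sum_congr rfl fun i hi => ?_
    have := mem_range.1 hi
    rw [(ih (m - i) (by omega)).1, (ih i (by omega)).2.2.2, (ih (m - i) (by omega)).2.2.1,
      (ih i (by omega)).2.1, coeff_catalanSeriesInt, coeff_catalanSeriesInt]
  rw [show 2 * (m + 1) = 2 * m + 2 by ring]
  refine ⟨hQ_even, ?_⟩
  rw [h.coeff_P_two_mul_add_two m, (ih m (by omega)).2.1, hQ_even]
  simp only [coeff_succ_X_mul, map_sub, coeff_catalanSeriesInt]
  ring

theorem coeff_P_two_mul_add_two_eq_centralBinom (h : IsNormalFormSystem P Q) (m : ℕ) :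
    (P (2 * m + 2)).coeff (m + 1) = m.centralBinom := by
  rw [show 2 * m + 2 = 2 * (m + 1) by ring]
  simpa [coeff_succ_X_mul] using (h.top_coeffs_eq (m + 1)).2.2.2

end IsNormalFormSystem

theorem normal_form_even_leading_coeff
    (P Q : ℕ → Polynomial ℤ)
    (hP0 : P 0 = 0) (hQ0 : Q 0 = 0)
    (hP1 : P 1 = X) (hQ1 : Q 1 = X)
    (hQrec : ∀ n, 1 ≤ n →
      Q (n + 1) = ∑ k ∈ Finset.range (n + 1), Q (n - k) * P k)
    (hPrec : ∀ n, P (n + 1) = (P n).comp (X + 1) + Q (n + 1)) :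
    (P 0).coeff 0 = 0 ∧ (P 2).coeff 1 = 1 ∧
    (∀ q : ℕ, (P (2 * q + 4)).coeff (q + 2) = 2 * Nat.choose (2 * q + 1) q) := by
  have h : IsNormalFormSystem P Q := ⟨hP0, hQ0, hP1, hQ1, hQrec, hPrec⟩
  refine ⟨by rw [hP0, coeff_zero], ?_, fun q => ?_⟩
  · simpa using h.coeff_P_two_mul_add_two_eq_centralBinom 0
  · rw [show 2 * q + 4 = 2 * (q + 1) + 2 by ring,
      h.coeff_P_two_mul_add_two_eq_centralBinom (q + 1),
      Nat.centralBinom_succ_eq_two_mul_choose]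
    norm_cast
end
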